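/- arXiv:1604.05540 — 2 statements merged into one kernel-verified Lean document; each statement's English description precedes it below -/
import Mathlib

section
/- Assume ν = 2κλ/θ² > 1/2 and let p > 0 satisfy p ≤ 2κ/θ². Then for every partition 0 = t₀ < ⋯ < t_N = T one has sup_{t∈[0,T]} E[ exp(p v̂_t) ] ≤ exp(p v₀) · exp(κλ p T); in particular this bound is independent of the partition. -/
open MeasureTheory ProbabilityTheory
open scoped ENNReal NNReal

noncomputable section

variable {Ω : Type*} [MeasurableSpace Ω]

/-- A standard Brownian motion (indexed by all of `ℝ`; only nonnegative times matter):
it starts at `0`, has Gaussian increments with the correct variance, and has independent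
increments. -/
structure IsBrownian (P : Measure Ω) (W : ℝ → Ω → ℝ) : Prop where
  meas : ∀ s : ℝ, Measurable (W s)
  start : ∀ ω, W 0 ω = 0
  gauss : ∀ s t : ℝ, 0 ≤ s → s ≤ t →
    Measure.map (fun ω => W t ω - W s ω) P = gaussianReal 0 (Real.toNNReal (t - s))
  indep : ∀ u : ℕ → ℝ, Monotone u →
    iIndepFun (fun k ω => W (u (k + 1)) ω - W (u k) ω) P

/-- A partition `0 = t₀ < t₁ < ⋯ < t_N = T` of `[0, T]`. -/
structure IsPartition (t : ℕ → ℝ) (N : ℕ) (T : ℝ) : Prop where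
  zero : t 0 = 0
  last : t N = T
  lt : ∀ k < N, t k < t (k + 1)

/-- The mesh `Δ = max_{1 ≤ k ≤ N} (t_k - t_{k-1})` of a partition. -/
def mesh (t : ℕ → ℝ) (N : ℕ) : ℝ := ⨆ k ∈ Finset.range N, (t (k + 1) - t k)

/-- The drift-implicit Milstein scheme `v_n` for the CIR process (closed form). -/
def milstein (κ lam θ v₀ : ℝ) (t : ℕ → ℝ) (W : ℝ → Ω → ℝ) : ℕ → Ω → ℝ
  | 0 => fun _ => v₀
  | n + 1 => fun ω =>
      (1 / (1 + κ * (t (n + 1) - t n))) *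
        ((Real.sqrt (milstein κ lam θ v₀ t W n ω)
            + (θ / 2) * (W (t (n + 1)) ω - W (t n) ω)) ^ 2
          + (κ * lam - θ ^ 2 / 4) * (t (n + 1) - t n))

/-- `n(s)`: the index of the largest partition point `≤ s`. -/
def nIdx (t : ℕ → ℝ) (N : ℕ) (s : ℝ) : ℕ := Nat.findGreatest (fun n => t n ≤ s) N

/-- `η(s)`: the largest partition point `≤ s`. -/
def eta (t : ℕ → ℝ) (N : ℕ) (s : ℝ) : ℝ := t (nIdx t N s)

/-- `ṽ_s`: the interpolation of the Milstein scheme before the implicit-drift division. -/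
def tildeV (κ lam θ v₀ : ℝ) (t : ℕ → ℝ) (N : ℕ) (W : ℝ → Ω → ℝ) (s : ℝ) (ω : Ω) : ℝ :=
  milstein κ lam θ v₀ t W (nIdx t N s) ω + κ * lam * (s - eta t N s)
    + θ * Real.sqrt (milstein κ lam θ v₀ t W (nIdx t N s) ω) * (W s ω - W (eta t N s) ω)
    + (θ ^ 2 / 4) * ((W s ω - W (eta t N s) ω) ^ 2 - (s - eta t N s))

/-- `v̂_s`: the continuous-time interpolation of the Milstein scheme. -/
def hatV (κ lam θ v₀ : ℝ) (t : ℕ → ℝ) (N : ℕ) (W : ℝ → Ω → ℝ) (s : ℝ) (ω : Ω) : ℝ :=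
  tildeV κ lam θ v₀ t N W s ω / (1 + κ * (s - eta t N s))

/-!
Both `v_{n+1}` and `v̂_s` are one drift-implicit Milstein step
`F_h(v, g) = ((√v + θg/2)² + (κλ - θ²/4)h) / (1 + κh)` applied to `v = v_{n(s)}` and to a
`N(0, h)` Brownian increment `g` independent of `v_{n(s)}`. The noncentral Gaussian identity
`E exp(a(μ + G)²) = exp(aμ²/(1 - 2aV)) / √(1 - 2aV)` for `G ~ N(0, V)` shows that, as soon as
`pθ² ≤ 2κ` and `θ²/4 ≤ κλ` (from `ν > 1/2`), `E exp(p F_h(v, G)) ≤ exp(κλph) exp(pv)` for every `v ≥ 0`.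
Conditioning on `v_{n(s)}` and iterating along the grid gives `E exp(p v̂_s) ≤ exp(pv₀) exp(κλps)`.
-/

open Real

theorem lintegral_exp_mul_sq_gaussianReal (μ : ℝ) (V : ℝ≥0) {a : ℝ} (ha : 2 * a * V < 1) :
    ∫⁻ x, ENNReal.ofReal (exp (a * x ^ 2)) ∂gaussianReal μ V
      = ENNReal.ofReal (exp (a * μ ^ 2 / (1 - 2 * a * V)) / √(1 - 2 * a * V)) := by
  rcases eq_or_ne V 0 with rfl | hV
  · simp [gaussianReal_zero_var]
  have hV0 : (0 : ℝ) < V := by positivity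
  set q := 1 - 2 * a * V with hq
  have hq0 : 0 < q := by linarith
  have hcomplete_square : ∀ x, gaussianPDFReal μ V x * exp (a * x ^ 2)
      = (√(2 * π * V))⁻¹ * exp (a * μ ^ 2 / q) * exp (-(q / (2 * V)) * (x - μ / q) ^ 2) := by
    intro x
    simp only [gaussianPDFReal, mul_assoc, ← exp_add]
    congr 2
    field_simp
    rw [hq]
    ring
  have hmeas : Measurable fun x : ℝ => ENNReal.ofReal (exp (a * x ^ 2)) := by fun_prop
  calc ∫⁻ x, ENNReal.ofReal (exp (a * x ^ 2)) ∂gaussianReal μ V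
      = ∫⁻ x, ENNReal.ofReal ((√(2 * π * V))⁻¹ * exp (a * μ ^ 2 / q)
          * exp (-(q / (2 * V)) * (x - μ / q) ^ 2)) := by
        rw [gaussianReal_of_var_ne_zero μ hV,
          lintegral_withDensity_eq_lintegral_mul _ (measurable_gaussianPDF μ V) hmeas]
        congr 1 with x
        rw [Pi.mul_apply, gaussianPDF, ← ENNReal.ofReal_mul (gaussianPDFReal_nonneg _ _ _),
          hcomplete_square]
    _ = ENNReal.ofReal ((√(2 * π * V))⁻¹ * exp (a * μ ^ 2 / q) * √(π / (q / (2 * V)))) := by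
        rw [← ofReal_integral_eq_lintegral_ofReal, integral_const_mul,
          integral_sub_right_eq_self (fun x => exp (-(q / (2 * V)) * x ^ 2)), integral_gaussian]
        · exact ((integrable_exp_neg_mul_sq (by positivity)).comp_sub_right _).const_mul _
        · exact Filter.Eventually.of_forall fun x => by positivity
    _ = ENNReal.ofReal (exp (a * μ ^ 2 / q) / √q) := by
        congr 1
        rw [mul_right_comm, ← sqrt_inv, ← sqrt_mul (by positivity), div_eq_mul_inv (exp _),
          mul_comm (exp _), ← sqrt_inv]
        congr 2
        field_simp

lemma gaussianReal_map_const_add_mul (μ c y : ℝ) (V : ℝ≥0) :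
    (gaussianReal μ V).map (fun x => y + c * x)
      = gaussianReal (c * μ + y) ((c ^ 2).toNNReal * V) := by
  rw [show (fun x => y + c * x) = (· + y) ∘ (c * ·) by ext; simp [add_comm],
    ← Measure.map_map (by fun_prop) (by fun_prop), gaussianReal_map_const_mul,
    gaussianReal_map_add_const, Real.toNNReal_of_nonneg (sq_nonneg c)]

theorem ProbabilityTheory.IndepFun.lintegral_comp_eq_lintegral_lintegral {Ω α β : Type*}
    [MeasurableSpace Ω] [MeasurableSpace α] [MeasurableSpace β] {P : Measure Ω} [IsFiniteMeasure P]
    {X : Ω → α} {Y : Ω → β} (hXY : IndepFun X Y P) (hX : Measurable X) (hY : Measurable Y)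
    {f : α × β → ℝ≥0∞} (hf : Measurable f) :
    ∫⁻ ω, f (X ω, Y ω) ∂P = ∫⁻ x, ∫⁻ y, f (x, y) ∂(P.map Y) ∂(P.map X) := by
  rw [← lintegral_map hf (hX.prodMk hY),
    (indepFun_iff_map_prod_eq_prod_map_map hX.aemeasurable hY.aemeasurable).1 hXY,
    lintegral_prod _ hf.aemeasurable]

lemma one_div_sqrt_le_exp_half {q u : ℝ} (hq : 0 < q) (h : 1 ≤ q * (1 + u)) :
    1 / √q ≤ exp (u / 2) :=
  calc 1 / √q = √(1 / q) := by rw [sqrt_div' _ hq.le, sqrt_one]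
    _ ≤ √(exp u) := by
      gcongr
      rw [div_le_iff₀ hq]
      nlinarith [add_one_le_exp u]
    _ = exp (u / 2) := (exp_half u).symm

/-- One step of length `h` of the scheme from the state `v` with Brownian increment `g`. -/
def milsteinStep (κ lam θ h v g : ℝ) : ℝ :=
  ((√v + θ / 2 * g) ^ 2 + (κ * lam - θ ^ 2 / 4) * h) / (1 + κ * h)

lemma measurable_milsteinStep (κ lam θ h : ℝ) :
    Measurable fun q : ℝ × ℝ => milsteinStep κ lam θ h q.1 q.2 := by
  unfold milsteinStep
  fun_prop

lemma milsteinStep_nonneg {κ lam θ h : ℝ} (hκ : 0 ≤ κ) (hfell : θ ^ 2 / 4 ≤ κ * lam)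
    (hh : 0 ≤ h) (v g : ℝ) : 0 ≤ milsteinStep κ lam θ h v g :=
  div_nonneg (add_nonneg (sq_nonneg _) (mul_nonneg (sub_nonneg.2 hfell) hh)) (by positivity)

lemma lintegral_exp_milsteinStep_gaussianReal_le {κ lam θ p h v : ℝ} (hκ : 0 ≤ κ)
    (hfell : θ ^ 2 / 4 ≤ κ * lam) (hp : 0 ≤ p) (hpθ : p * θ ^ 2 ≤ 2 * κ) (hh : 0 ≤ h)
    (hv : 0 ≤ v) :
    ∫⁻ g, ENNReal.ofReal (exp (p * milsteinStep κ lam θ h v g)) ∂gaussianReal 0 h.toNNReal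
      ≤ ENNReal.ofReal (exp (κ * lam * p * h + p * v)) := by
  set D := 1 + κ * h with hD
  set e := (κ * lam - θ ^ 2 / 4) * h with he
  set u := p * θ ^ 2 * h / 2 with hu
  have hD1 : 1 ≤ D := by nlinarith
  -- this is where `p ≤ 2κ/θ²` enters: the implicit damping `κh` dominates `u`
  have huD : u ≤ D - 1 := by nlinarith
  have hDq : D * (1 - u / D) = D - u := by field_simp
  have hq : 0 < 1 - u / D := by nlinarith
  have hvar : ((((θ / 2) ^ 2).toNNReal * h.toNNReal : ℝ≥0) : ℝ) = (θ / 2) ^ 2 * h := by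
    rw [NNReal.coe_mul, Real.coe_toNNReal _ (sq_nonneg _), Real.coe_toNNReal _ hh]
  have hau : 2 * (p / D) * ((θ / 2) ^ 2 * h) = u / D := by ring
  have hmeas : Measurable fun z : ℝ =>
      ENNReal.ofReal (exp (p * e / D)) * ENNReal.ofReal (exp (p / D * z ^ 2)) := by fun_prop
  have hsqrt : 1 / √(1 - u / D) ≤ exp (u / 2) := by
    refine one_div_sqrt_le_exp_half hq ?_
    have : D * ((1 - u / D) * (1 + u) - 1) = u * (D - 1 - u) := by
      linear_combination (1 + u) * hDq
    nlinarith [mul_nonneg (by positivity : 0 ≤ u) (sub_nonneg.2 huD)]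
  have hdrift : p * e / D ≤ p * e :=
    div_le_self (mul_nonneg hp (mul_nonneg (sub_nonneg.2 hfell) hh)) hD1
  have hdiffusion : p / D * √v ^ 2 / (1 - u / D) ≤ p * v := by
    rw [sq_sqrt hv, div_mul_eq_mul_div, div_div, hDq]
    exact div_le_self (by positivity) (by linarith)
  calc ∫⁻ g, ENNReal.ofReal (exp (p * milsteinStep κ lam θ h v g)) ∂gaussianReal 0 h.toNNReal
      = ∫⁻ g, ENNReal.ofReal (exp (p * e / D))
          * ENNReal.ofReal (exp (p / D * (√v + θ / 2 * g) ^ 2)) ∂gaussianReal 0 h.toNNReal := by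
        congr 1 with g
        rw [← ENNReal.ofReal_mul (exp_pos _).le, ← exp_add, milsteinStep, ← hD, ← he]
        ring_nf
    _ = ENNReal.ofReal (exp (p * e / D) * (exp (p / D * √v ^ 2 / (1 - u / D)) / √(1 - u / D))) := by
        rw [← lintegral_map hmeas (by fun_prop), gaussianReal_map_const_add_mul,
          lintegral_const_mul _ (by fun_prop),
          lintegral_exp_mul_sq_gaussianReal _ _ (by rw [hvar, hau]; linarith), hvar, hau,
          mul_zero, zero_add, ENNReal.ofReal_mul (exp_pos _).le]
    _ ≤ ENNReal.ofReal (exp (p * e + p * v) * exp (u / 2)) := by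
        rw [div_eq_mul_one_div (exp _), ← mul_assoc, ← exp_add]
        gcongr
    _ = ENNReal.ofReal (exp (κ * lam * p * h + p * v)) := by
        rw [← exp_add, he, hu]
        ring_nf

lemma lintegral_exp_milsteinStep_le_of_indepFun {P : Measure Ω} [IsProbabilityMeasure P]
    {κ lam θ p h : ℝ} (hκ : 0 ≤ κ) (hfell : θ ^ 2 / 4 ≤ κ * lam) (hp : 0 ≤ p)
    (hpθ : p * θ ^ 2 ≤ 2 * κ) (hh : 0 ≤ h) {X G : Ω → ℝ} (hX : Measurable X)
    (hG : Measurable G) (hX0 : ∀ ω, 0 ≤ X ω) (hXG : IndepFun X G P)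
    (hGlaw : P.map G = gaussianReal 0 h.toNNReal) :
    ∫⁻ ω, ENNReal.ofReal (exp (p * milsteinStep κ lam θ h (X ω) (G ω))) ∂P
      ≤ ENNReal.ofReal (exp (κ * lam * p * h)) * ∫⁻ ω, ENNReal.ofReal (exp (p * X ω)) ∂P := by
  have hX0' : ∀ᵐ x ∂P.map X, 0 ≤ x :=
    (ae_map_iff hX.aemeasurable measurableSet_Ici).2 (ae_of_all _ hX0)
  calc ∫⁻ ω, ENNReal.ofReal (exp (p * milsteinStep κ lam θ h (X ω) (G ω))) ∂P
      = ∫⁻ x, ∫⁻ g, ENNReal.ofReal (exp (p * milsteinStep κ lam θ h x g)) ∂P.map G ∂P.map X :=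
        hXG.lintegral_comp_eq_lintegral_lintegral hX hG
          (f := fun q => ENNReal.ofReal (exp (p * milsteinStep κ lam θ h q.1 q.2)))
          (by have := measurable_milsteinStep κ lam θ h; fun_prop)
    _ ≤ ∫⁻ x, ENNReal.ofReal (exp (κ * lam * p * h)) * ENNReal.ofReal (exp (p * x)) ∂P.map X := by
        refine lintegral_mono_ae (hX0'.mono fun x hx => ?_)
        rw [hGlaw, ← ENNReal.ofReal_mul (exp_pos _).le, ← exp_add]
        exact lintegral_exp_milsteinStep_gaussianReal_le hκ hfell hp hpθ hh hx
    _ = ENNReal.ofReal (exp (κ * lam * p * h)) * ∫⁻ ω, ENNReal.ofReal (exp (p * X ω)) ∂P := by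
        rw [lintegral_const_mul _ (by fun_prop), lintegral_map (by fun_prop) hX]

section Scheme

variable {κ lam θ v₀ : ℝ} {t : ℕ → ℝ}

lemma milstein_succ {Ω : Type*} (W : ℝ → Ω → ℝ) (n : ℕ) (ω : Ω) :
    milstein κ lam θ v₀ t W (n + 1) ω
      = milsteinStep κ lam θ (t (n + 1) - t n) (milstein κ lam θ v₀ t W n ω)
          (W (t (n + 1)) ω - W (t n) ω) := by
  simp only [milstein, milsteinStep, one_div, inv_mul_eq_div]

lemma milstein_nonneg {Ω : Type*} {W : ℝ → Ω → ℝ} (hκ : 0 ≤ κ)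
    (hfell : θ ^ 2 / 4 ≤ κ * lam) (hv₀ : 0 ≤ v₀) {n : ℕ} (hmono : MonotoneOn t (Set.Iic n))
    (ω : Ω) : 0 ≤ milstein κ lam θ v₀ t W n ω := by
  cases n with
  | zero => exact hv₀
  | succ n =>
    rw [milstein_succ]
    exact milsteinStep_nonneg hκ hfell
      (sub_nonneg.2 (hmono (Set.mem_Iic.2 n.le_succ) (Set.mem_Iic.2 le_rfl) n.le_succ)) _ _

lemma measurable_milstein_iSup_comap {Ω : Type*} {W : ℝ → Ω → ℝ} {n : ℕ} {f : ℕ → Ω → ℝ}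
    (hf : ∀ k < n, f k = fun ω => W (t (k + 1)) ω - W (t k) ω) :
    Measurable[⨆ k ∈ Set.Iio n, MeasurableSpace.comap (f k) inferInstance]
      (milstein κ lam θ v₀ t W n) := by
  induction n with
  | zero => exact measurable_const
  | succ n ih =>
    have hv := (ih fun k hk => hf k (by omega)).mono
      (biSup_mono fun k hk => Set.Iio_subset_Iio n.le_succ hk) le_rfl
    have hfn : Measurable[⨆ k ∈ Set.Iio (n + 1), MeasurableSpace.comap (f k) inferInstance]
        (f n) :=
      (comap_measurable (f n)).mono
        (le_iSup₂ (f := fun k (_ : k ∈ Set.Iio (n + 1)) => MeasurableSpace.comap (f k) _) n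
          n.lt_succ_self) le_rfl
    rw [hf n n.lt_succ_self] at hfn
    have : milstein κ lam θ v₀ t W (n + 1) = fun ω => milsteinStep κ lam θ (t (n + 1) - t n)
        (milstein κ lam θ v₀ t W n ω) (W (t (n + 1)) ω - W (t n) ω) := funext (milstein_succ W n)
    rw [this]
    exact (measurable_milsteinStep κ lam θ _).comp (hv.prodMk hfn)

lemma measurable_milstein {W : ℝ → Ω → ℝ} (hW : ∀ s, Measurable (W s)) (n : ℕ) :
    Measurable (milstein κ lam θ v₀ t W n) :=
  (measurable_milstein_iSup_comap (f := fun k ω => W (t (k + 1)) ω - W (t k) ω)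
    fun _ _ => rfl).mono (iSup₂_le fun _ _ => ((hW _).sub (hW _)).comap_le) le_rfl

lemma hatV_eq_milsteinStep {Ω : Type*} {W : ℝ → Ω → ℝ} {N : ℕ} {s : ℝ} {ω : Ω}
    (hv : 0 ≤ milstein κ lam θ v₀ t W (nIdx t N s) ω) :
    hatV κ lam θ v₀ t N W s ω
      = milsteinStep κ lam θ (s - t (nIdx t N s)) (milstein κ lam θ v₀ t W (nIdx t N s) ω)
          (W s ω - W (t (nIdx t N s)) ω) := by
  rw [hatV, tildeV, milsteinStep, eta]
  congr 1
  linear_combination -sq_sqrt hv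

lemma IsBrownian.indepFun_milstein_increment {P : Measure Ω} {W : ℝ → Ω → ℝ}
    (hW : IsBrownian P W) {n : ℕ} {s : ℝ} (hmono : MonotoneOn t (Set.Iic n)) (hs : t n ≤ s) :
    IndepFun (milstein κ lam θ v₀ t W n) (fun ω => W s ω - W (t n) ω) P := by
  -- the grid `t 0 ≤ ⋯ ≤ t n ≤ s ≤ s ≤ ⋯`, whose increments are independent
  set u : ℕ → ℝ := fun k => if k ≤ n then t k else s with hu
  have hu_mono : Monotone u := monotone_nat_of_le_succ fun k => by
    by_cases hk : k + 1 ≤ n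
    · simp only [hu, if_pos hk, if_pos (k.le_succ.trans hk)]
      exact hmono (Set.mem_Iic.2 (k.le_succ.trans hk)) (Set.mem_Iic.2 hk) k.le_succ
    · by_cases hkn : k = n
      · simp [hu, hkn, hs]
      · simp only [hu, if_neg hk, if_neg (by omega : ¬k ≤ n), le_refl]
  have hincr := indep_iSup_of_disjoint (fun k => ((hW.meas _).sub (hW.meas _)).comap_le)
    (hW.indep u hu_mono).iIndep (S := Set.Iio n) (T := {n}) (by simp)
  rw [iSup_singleton] at hincr
  have hlast : (fun ω => W (u (n + 1)) ω - W (u n) ω) = fun ω => W s ω - W (t n) ω := by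
    simp [hu]
  rw [IndepFun_iff_Indep, ← hlast]
  refine indep_of_indep_of_le_left hincr (Measurable.comap_le ?_)
  refine measurable_milstein_iSup_comap fun k hk => ?_
  simp only [hu, if_pos hk.le, if_pos (Nat.succ_le_of_lt hk)]
  rfl

lemma IsBrownian.lintegral_exp_milsteinStep_le {P : Measure Ω} [IsProbabilityMeasure P]
    {W : ℝ → Ω → ℝ} (hW : IsBrownian P W) {p : ℝ} (hκ : 0 ≤ κ) (hfell : θ ^ 2 / 4 ≤ κ * lam)
    (hp : 0 ≤ p) (hpθ : p * θ ^ 2 ≤ 2 * κ) (hv₀ : 0 ≤ v₀) {n : ℕ} {s : ℝ}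
    (hmono : MonotoneOn t (Set.Iic n)) (ht : 0 ≤ t n) (hs : t n ≤ s) :
    ∫⁻ ω, ENNReal.ofReal (exp (p * milsteinStep κ lam θ (s - t n) (milstein κ lam θ v₀ t W n ω)
        (W s ω - W (t n) ω))) ∂P
      ≤ ENNReal.ofReal (exp (κ * lam * p * (s - t n)))
          * ∫⁻ ω, ENNReal.ofReal (exp (p * milstein κ lam θ v₀ t W n ω)) ∂P :=
  lintegral_exp_milsteinStep_le_of_indepFun hκ hfell hp hpθ (sub_nonneg.2 hs)
    (measurable_milstein hW.meas n) ((hW.meas s).sub (hW.meas _)) (milstein_nonneg hκ hfell hv₀ hmono)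
    (hW.indepFun_milstein_increment hmono hs) (hW.gauss _ _ ht hs)

lemma IsBrownian.lintegral_exp_milstein_le {P : Measure Ω} [IsProbabilityMeasure P]
    {W : ℝ → Ω → ℝ} (hW : IsBrownian P W) {p : ℝ} (hκ : 0 ≤ κ) (hfell : θ ^ 2 / 4 ≤ κ * lam)
    (hp : 0 ≤ p) (hpθ : p * θ ^ 2 ≤ 2 * κ) (hv₀ : 0 ≤ v₀) (ht₀ : 0 ≤ t 0) {n : ℕ}
    (hmono : MonotoneOn t (Set.Iic n)) :
    ∫⁻ ω, ENNReal.ofReal (exp (p * milstein κ lam θ v₀ t W n ω)) ∂P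
      ≤ ENNReal.ofReal (exp (p * v₀ + κ * lam * p * (t n - t 0))) := by
  induction n with
  | zero => simp [milstein]
  | succ n ih =>
    have hmono' := hmono.mono (Set.Iic_subset_Iic.2 n.le_succ)
    have ht : 0 ≤ t n := ht₀.trans (hmono' (by simp) (by simp) n.zero_le)
    have hstep : t n ≤ t (n + 1) :=
      hmono (Set.mem_Iic.2 n.le_succ) (Set.mem_Iic.2 le_rfl) n.le_succ
    calc ∫⁻ ω, ENNReal.ofReal (exp (p * milstein κ lam θ v₀ t W (n + 1) ω)) ∂P
        = ∫⁻ ω, ENNReal.ofReal (exp (p * milsteinStep κ lam θ (t (n + 1) - t n)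
            (milstein κ lam θ v₀ t W n ω) (W (t (n + 1)) ω - W (t n) ω))) ∂P := by
          simp only [milstein_succ]
      _ ≤ ENNReal.ofReal (exp (κ * lam * p * (t (n + 1) - t n)))
            * ∫⁻ ω, ENNReal.ofReal (exp (p * milstein κ lam θ v₀ t W n ω)) ∂P :=
          hW.lintegral_exp_milsteinStep_le hκ hfell hp hpθ hv₀ hmono' ht hstep
      _ ≤ ENNReal.ofReal (exp (κ * lam * p * (t (n + 1) - t n)))
            * ENNReal.ofReal (exp (p * v₀ + κ * lam * p * (t n - t 0))) := by
          gcongr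
          exact ih hmono'
      _ = ENNReal.ofReal (exp (p * v₀ + κ * lam * p * (t (n + 1) - t 0))) := by
          rw [← ENNReal.ofReal_mul (exp_pos _).le, ← exp_add]
          ring_nf

end Scheme

lemma IsPartition.monotoneOn {t : ℕ → ℝ} {N : ℕ} {T : ℝ} (h : IsPartition t N T) :
    MonotoneOn t (Set.Iic N) :=
  (strictMonoOn_Iic_of_lt_succ fun m hm => h.lt m hm).monotoneOn

lemma nIdx_le (t : ℕ → ℝ) (N : ℕ) (s : ℝ) : nIdx t N s ≤ N := Nat.findGreatest_le N

lemma IsPartition.apply_nIdx_le {t : ℕ → ℝ} {N : ℕ} {T s : ℝ} (h : IsPartition t N T)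
    (hs : 0 ≤ s) : t (nIdx t N s) ≤ s :=
  Nat.findGreatest_spec (P := fun k => t k ≤ s) N.zero_le (h.zero ▸ hs)

theorem statement3_general
    {Ω : Type*} [MeasurableSpace Ω] (P : Measure Ω) [IsProbabilityMeasure P]
    (W : ℝ → Ω → ℝ) (hW : IsBrownian P W)
    (κ lam θ v₀ T : ℝ)
    (hκ : 0 < κ) (hlam : 0 < lam) (hθ : 0 < θ) (hv₀ : 0 < v₀)
    (hFeller : 1 / 2 < 2 * κ * lam / θ ^ 2)
    (p : ℝ) (hp : 0 < p) (hpκ : p ≤ 2 * κ / θ ^ 2) :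
    ∀ (N : ℕ) (t : ℕ → ℝ), IsPartition t N T → ∀ s ∈ Set.Icc (0 : ℝ) T,
      ∫⁻ ω, ENNReal.ofReal (Real.exp (p * hatV κ lam θ v₀ t N W s ω)) ∂P
        ≤ ENNReal.ofReal (Real.exp (p * v₀) * Real.exp (κ * lam * p * T)) := by
  intro N t hpart s hs
  have hfell : θ ^ 2 / 4 ≤ κ * lam := by
    rw [lt_div_iff₀ (by positivity)] at hFeller
    linarith
  have hpθ : p * θ ^ 2 ≤ 2 * κ := (le_div_iff₀ (by positivity)).1 hpκ
  set n := nIdx t N s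
  have hmono : MonotoneOn t (Set.Iic n) :=
    hpart.monotoneOn.mono (Set.Iic_subset_Iic.2 (nIdx_le t N s))
  have hns : t n ≤ s := hpart.apply_nIdx_le hs.1
  have ht : 0 ≤ t n := hpart.zero ▸ hmono (by simp) (by simp) n.zero_le
  calc ∫⁻ ω, ENNReal.ofReal (exp (p * hatV κ lam θ v₀ t N W s ω)) ∂P
      = ∫⁻ ω, ENNReal.ofReal (exp (p * milsteinStep κ lam θ (s - t n)
          (milstein κ lam θ v₀ t W n ω) (W s ω - W (t n) ω))) ∂P := by
        refine lintegral_congr fun ω => ?_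
        rw [hatV_eq_milsteinStep (milstein_nonneg hκ.le hfell hv₀.le hmono ω)]
    _ ≤ ENNReal.ofReal (exp (κ * lam * p * (s - t n)))
          * ENNReal.ofReal (exp (p * v₀ + κ * lam * p * (t n - t 0))) := by
        refine (hW.lintegral_exp_milsteinStep_le hκ.le hfell hp.le hpθ hv₀.le hmono ht hns).trans ?_
        gcongr
        exact hW.lintegral_exp_milstein_le hκ.le hfell hp.le hpθ hv₀.le hpart.zero.ge hmono
    _ ≤ ENNReal.ofReal (exp (p * v₀) * exp (κ * lam * p * T)) := by
        rw [← ENNReal.ofReal_mul (exp_pos _).le, ← exp_add, ← exp_add, hpart.zero]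
        refine ENNReal.ofReal_le_ofReal (exp_le_exp.2 ?_)
        nlinarith [mul_le_mul_of_nonneg_left hs.2 (by positivity : 0 ≤ κ * lam * p)]

/-- under `ν = 2κλ/θ² > 1/2`, for `0 < p ≤ 2κ/θ²` and every partition, the
interpolated drift-implicit Milstein scheme satisfies
`sup_{t ∈ [0,T]} E[exp(p v̂_t)] ≤ exp(p v₀) exp(κλpT)`, a bound independent of the partition. -/
theorem statement3
    {Ω : Type*} [MeasurableSpace Ω] (P : Measure Ω) [IsProbabilityMeasure P]
    (W : ℝ → Ω → ℝ) (hW : IsBrownian P W)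
    (κ lam θ v₀ T : ℝ)
    (hκ : 0 < κ) (hlam : 0 < lam) (hθ : 0 < θ) (hv₀ : 0 < v₀) (hT : 0 < T)
    (hFeller : 1 / 2 < 2 * κ * lam / θ ^ 2)
    (p : ℝ) (hp : 0 < p) (hpκ : p ≤ 2 * κ / θ ^ 2) :
    ∀ (N : ℕ) (t : ℕ → ℝ), IsPartition t N T → ∀ s ∈ Set.Icc (0 : ℝ) T,
      ∫⁻ ω, ENNReal.ofReal (Real.exp (p * hatV κ lam θ v₀ t N W s ω)) ∂P
        ≤ ENNReal.ofReal (Real.exp (p * v₀) * Real.exp (κ * lam * p * T)) :=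
  statement3_general P W hW κ lam θ v₀ T hκ hlam hθ hv₀ hFeller p hp hpκ
end
end

section
/- Assume ν = 2κλ/θ² > 1/2 and ρ < 0. Then, almost surely, ρ · Σ_{k=0}^{N−1} √(v_k) Δ_kW ≤ (|ρ|/θ) · ( v₀ + κλT + (θ²/4) Σ_{k=0}^{N−1} (Δ_kW)² ). -/
open MeasureTheory ProbabilityTheory
open scoped ENNReal NNReal

noncomputable section

variable {Ω : Type*} [MeasurableSpace Ω]

/-!
Along every path, the implicit recursion solved for the martingale increment reads, with
`h_k = t_{k+1} - t_k`,
`-θ √v_k Δ_kW = (v_k - v_{k+1}) + κλ h_k + (θ²/4) (Δ_kW)² - (κ v_{k+1} + θ²/4) h_k`.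
When `κλ ≥ θ²/4` (i.e. `ν ≥ 1/2`) the scheme stays nonnegative, so the last term can be dropped;
summing over `k` telescopes the first term to `v₀ - v_N ≤ v₀`. Multiplying by `|ρ|/θ` gives the
bound, which therefore holds for every `ω`.
-/

section

variable {Ω : Type*} {κ lam θ v₀ : ℝ} {t : ℕ → ℝ} {W : ℝ → Ω → ℝ} {ω : Ω}

theorem milstein_zero : milstein κ lam θ v₀ t W 0 ω = v₀ := rfl

theorem milstein_succ_nonneg (hκ : 0 ≤ κ) (hdrift : θ ^ 2 / 4 ≤ κ * lam) {n : ℕ}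
    (hn : t n ≤ t (n + 1)) : 0 ≤ milstein κ lam θ v₀ t W (n + 1) ω := by
  have hdrift' : 0 ≤ (κ * lam - θ ^ 2 / 4) * (t (n + 1) - t n) :=
    mul_nonneg (sub_nonneg.2 hdrift) (sub_nonneg.2 hn)
  simp only [milstein]
  positivity

theorem milstein_nonneg_s16 (hκ : 0 ≤ κ) (hdrift : θ ^ 2 / 4 ≤ κ * lam) (hv₀ : 0 ≤ v₀) {N : ℕ}
    (ht : ∀ k < N, t k ≤ t (k + 1)) : ∀ k ≤ N, 0 ≤ milstein κ lam θ v₀ t W k ω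
  | 0, _ => hv₀
  | k + 1, hk => milstein_succ_nonneg hκ hdrift (ht k hk)

theorem milstein_succ_implicit {n : ℕ} (hv : 0 ≤ milstein κ lam θ v₀ t W n ω)
    (hden : 1 + κ * (t (n + 1) - t n) ≠ 0) :
    milstein κ lam θ v₀ t W (n + 1) ω =
      milstein κ lam θ v₀ t W n ω
        + κ * (lam - milstein κ lam θ v₀ t W (n + 1) ω) * (t (n + 1) - t n)
        + θ * Real.sqrt (milstein κ lam θ v₀ t W n ω) * (W (t (n + 1)) ω - W (t n) ω)
        + θ ^ 2 / 4 * ((W (t (n + 1)) ω - W (t n) ω) ^ 2 - (t (n + 1) - t n)) := by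
  have hstep : (1 + κ * (t (n + 1) - t n)) * milstein κ lam θ v₀ t W (n + 1) ω =
      (Real.sqrt (milstein κ lam θ v₀ t W n ω) + θ / 2 * (W (t (n + 1)) ω - W (t n) ω)) ^ 2
        + (κ * lam - θ ^ 2 / 4) * (t (n + 1) - t n) := by
    simp only [milstein]
    field_simp
  linear_combination hstep + Real.sq_sqrt hv

theorem neg_mul_sqrt_mul_increment_le (hκ : 0 ≤ κ) {n : ℕ}
    (hn : t n ≤ t (n + 1)) (hv : 0 ≤ milstein κ lam θ v₀ t W n ω)
    (hv' : 0 ≤ milstein κ lam θ v₀ t W (n + 1) ω) :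
    -(θ * (Real.sqrt (milstein κ lam θ v₀ t W n ω) * (W (t (n + 1)) ω - W (t n) ω))) ≤
      milstein κ lam θ v₀ t W n ω - milstein κ lam θ v₀ t W (n + 1) ω
        + κ * lam * (t (n + 1) - t n) + θ ^ 2 / 4 * (W (t (n + 1)) ω - W (t n) ω) ^ 2 := by
  have hh : 0 ≤ t (n + 1) - t n := sub_nonneg.2 hn
  have hrec := milstein_succ_implicit hv (by positivity : 1 + κ * (t (n + 1) - t n) ≠ 0)
  have hdropped : 0 ≤ (κ * milstein κ lam θ v₀ t W (n + 1) ω + θ ^ 2 / 4) * (t (n + 1) - t n) := by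
    positivity
  linear_combination hrec + hdropped

theorem neg_mul_sum_sqrt_mul_increment_le (hκ : 0 ≤ κ) (hdrift : θ ^ 2 / 4 ≤ κ * lam)
    (hv₀ : 0 ≤ v₀) {N : ℕ} (ht : ∀ k < N, t k ≤ t (k + 1)) :
    -(θ * ∑ k ∈ Finset.range N,
        Real.sqrt (milstein κ lam θ v₀ t W k ω) * (W (t (k + 1)) ω - W (t k) ω)) ≤
      v₀ + κ * lam * (t N - t 0)
        + θ ^ 2 / 4 * ∑ k ∈ Finset.range N, (W (t (k + 1)) ω - W (t k) ω) ^ 2 := by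
  have hv := milstein_nonneg_s16 (W := W) (ω := ω) hκ hdrift hv₀ ht
  calc -(θ * ∑ k ∈ Finset.range N,
          Real.sqrt (milstein κ lam θ v₀ t W k ω) * (W (t (k + 1)) ω - W (t k) ω))
      = ∑ k ∈ Finset.range N, -(θ * (Real.sqrt (milstein κ lam θ v₀ t W k ω)
          * (W (t (k + 1)) ω - W (t k) ω))) := by
        rw [Finset.mul_sum, Finset.sum_neg_distrib]
    _ ≤ ∑ k ∈ Finset.range N, (milstein κ lam θ v₀ t W k ω - milstein κ lam θ v₀ t W (k + 1) ω
          + κ * lam * (t (k + 1) - t k) + θ ^ 2 / 4 * (W (t (k + 1)) ω - W (t k) ω) ^ 2) := by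
        refine Finset.sum_le_sum fun k hk => ?_
        have hk := Finset.mem_range.1 hk
        exact neg_mul_sqrt_mul_increment_le hκ (ht k hk) (hv k hk.le) (hv (k + 1) hk)
    _ = v₀ - milstein κ lam θ v₀ t W N ω + κ * lam * (t N - t 0)
          + θ ^ 2 / 4 * ∑ k ∈ Finset.range N, (W (t (k + 1)) ω - W (t k) ω) ^ 2 := by
        rw [Finset.sum_add_distrib, Finset.sum_add_distrib, Finset.sum_range_sub',
          ← Finset.mul_sum, ← Finset.mul_sum, Finset.sum_range_sub, milstein_zero]
    _ ≤ v₀ + κ * lam * (t N - t 0)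
          + θ ^ 2 / 4 * ∑ k ∈ Finset.range N, (W (t (k + 1)) ω - W (t k) ω) ^ 2 := by
        linarith [hv N le_rfl]

end

theorem statement16_general
    {Ω : Type*} [MeasurableSpace Ω] (P : Measure Ω)
    (W : ℝ → Ω → ℝ)
    (κ lam θ v₀ T ρ : ℝ)
    (hκ : 0 < κ) (hθ : 0 < θ) (hv₀ : 0 < v₀)
    (hFeller : 1 / 2 < 2 * κ * lam / θ ^ 2) (hρ : ρ < 0) :
    ∀ (N : ℕ) (t : ℕ → ℝ), IsPartition t N T →
      ∀ᵐ ω ∂P,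
        ρ * ∑ k ∈ Finset.range N,
            Real.sqrt (milstein κ lam θ v₀ t W k ω) * (W (t (k + 1)) ω - W (t k) ω)
          ≤ (|ρ| / θ) * (v₀ + κ * lam * T
              + (θ ^ 2 / 4) * ∑ k ∈ Finset.range N, (W (t (k + 1)) ω - W (t k) ω) ^ 2) := by
  intro N t ht
  have hdrift : θ ^ 2 / 4 ≤ κ * lam := by
    rw [lt_div_iff₀ (by positivity)] at hFeller
    linarith
  refine Filter.Eventually.of_forall fun ω => ?_
  have hbound := neg_mul_sum_sqrt_mul_increment_le (W := W) (ω := ω) hκ.le hdrift hv₀.le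
    fun k hk => (ht.lt k hk).le
  rw [ht.last, ht.zero, sub_zero] at hbound
  calc ρ * ∑ k ∈ Finset.range N,
          Real.sqrt (milstein κ lam θ v₀ t W k ω) * (W (t (k + 1)) ω - W (t k) ω)
      = (|ρ| / θ) * -(θ * ∑ k ∈ Finset.range N,
          Real.sqrt (milstein κ lam θ v₀ t W k ω) * (W (t (k + 1)) ω - W (t k) ω)) := by
        rw [abs_of_neg hρ]
        field_simp
    _ ≤ _ := mul_le_mul_of_nonneg_left hbound (by positivity)

/-- under `ν = 2κλ/θ² > 1/2` and `ρ ∈ [-1, 0)`, almost surely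
`ρ Σ_{k<N} √(v_k) Δ_kW ≤ (|ρ|/θ)(v₀ + κλT + (θ²/4) Σ_{k<N} (Δ_kW)²)`. -/
theorem statement16
    {Ω : Type*} [MeasurableSpace Ω] (P : Measure Ω) [IsProbabilityMeasure P]
    (W : ℝ → Ω → ℝ) (hW : IsBrownian P W)
    (κ lam θ v₀ T ρ : ℝ)
    (hκ : 0 < κ) (hlam : 0 < lam) (hθ : 0 < θ) (hv₀ : 0 < v₀) (hT : 0 < T)
    (hFeller : 1 / 2 < 2 * κ * lam / θ ^ 2) (hρ₁ : -1 ≤ ρ) (hρ : ρ < 0) :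
    ∀ (N : ℕ) (t : ℕ → ℝ), IsPartition t N T →
      ∀ᵐ ω ∂P,
        ρ * ∑ k ∈ Finset.range N,
            Real.sqrt (milstein κ lam θ v₀ t W k ω) * (W (t (k + 1)) ω - W (t k) ω)
          ≤ (|ρ| / θ) * (v₀ + κ * lam * T
              + (θ ^ 2 / 4) * ∑ k ∈ Finset.range N, (W (t (k + 1)) ω - W (t k) ω) ^ 2) :=
  statement16_general P W κ lam θ v₀ T ρ hκ hθ hv₀ hFeller hρ

end
end
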